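/- Let g ≥ 2 be an integer and p a prime with gcd(p, g) = 1. Then the set { (g^{(p−1)i} − 1)/p : i ∈ ℕ } of integers is unbounded with respect to the word metric d_g, i.e., the word lengths ℓ_g((g^{(p−1)i} − 1)/p) are not bounded above. -/

import Mathlib

/-- The generating set `S_g = {± g^k : k ∈ ℕ}` in `ℤ`. -/
def Sg (g : ℤ) : Set ℤ := {x | ∃ n : ℕ, x = g ^ n ∨ x = -g ^ n}

/-- The word length of `k` with respect to `S_g`. -/
noncomputable def wlen (g : ℤ) (k : ℤ) : ℕ :=
  sInf {m | ∃ l : List ℤ, (∀ x ∈ l, x ∈ Sg g) ∧ l.length = m ∧ l.sum = k}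

/-! If `p k = g^N - 1` and `k` is a sum of at most `C` signed powers of `g`, then by pigeonhole
some block of `B` consecutive exponents below `(C + 1) B` contains none of them: `k = a + b` with
`|a| ≤ C g^T` and `g^(T+B) ∣ b`. Then `g^(T+B)` divides `p a + 1 = g^N - p b`, which is nonzero
since `p ∤ 1`, but `|p a + 1| ≤ p C g^T + 1 < g^(T+B)` once `p C + 1 < g^B`. -/

theorem exists_list_wlen (g k : ℤ) :
    ∃ l : List ℤ, (∀ x ∈ l, x ∈ Sg g) ∧ l.length = wlen g k ∧ l.sum = k := by
  suffices h : {m | ∃ l : List ℤ, (∀ x ∈ l, x ∈ Sg g) ∧ l.length = m ∧ l.sum = k}.Nonempty from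
    Nat.sInf_mem h
  rcases Int.natAbs_eq k with hk | hk
  · exact ⟨_, List.replicate k.natAbs 1, fun x hx => ⟨0, by simp [List.eq_of_mem_replicate hx]⟩,
      rfl, by simpa using hk.symm⟩
  · exact ⟨_, List.replicate k.natAbs (-1), fun x hx => ⟨0, by simp [List.eq_of_mem_replicate hx]⟩,
      rfl, by simpa using hk.symm⟩

theorem abs_eq_pow_log_of_mem_Sg {g x : ℤ} (hg : 1 < g) (hx : x ∈ Sg g) :
    |x| = g ^ Nat.log g.natAbs x.natAbs := by
  obtain ⟨n, hn⟩ := hx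
  have habs : x.natAbs = g.natAbs ^ n := by rcases hn with rfl | rfl <;> simp [Int.natAbs_pow]
  rw [habs, Nat.log_pow (by omega), Int.abs_eq_natAbs, habs, Nat.cast_pow,
    Int.natAbs_of_nonneg (by omega)]

theorem List.exists_le_length_forall_lt_or_le (ns : List ℕ) (B : ℕ) :
    ∃ j ≤ ns.length, ∀ n ∈ ns, n < j * B ∨ (j + 1) * B ≤ n := by
  classical
  obtain ⟨j, hj, hjns⟩ : ∃ j ∈ Finset.range (ns.length + 1), j ∉ ns.toFinset.image (· / B) := by
    refine Finset.exists_mem_notMem_of_card_lt_card ?_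
    simpa using Finset.card_image_le.trans_lt (Nat.lt_succ_of_le ns.toFinset_card_le)
  refine ⟨j, by simpa [Nat.lt_succ_iff] using hj, fun n hn => ?_⟩
  by_contra! h
  exact hjns (Finset.mem_image.mpr ⟨n, List.mem_toFinset.mpr hn, Nat.div_eq_of_lt_le h.1 h.2⟩)

theorem List.exists_sum_eq_add_of_forall_abs_le_or_dvd (l : List ℤ) {c : ℤ} (hc : 0 ≤ c) (d : ℤ)
    (h : ∀ x ∈ l, |x| ≤ c ∨ d ∣ x) :
    ∃ a b, l.sum = a + b ∧ |a| ≤ l.length * c ∧ d ∣ b := by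
  induction l with
  | nil => exact ⟨0, 0, by simp⟩
  | cons x t ih =>
    obtain ⟨a, b, hab, ha, hb⟩ := ih fun y hy => h y (List.mem_cons_of_mem x hy)
    rcases h x List.mem_cons_self with hx | hx
    · refine ⟨x + a, b, by simp [hab]; ring, ?_, hb⟩
      calc |x + a| ≤ |x| + |a| := abs_add_le x a
        _ ≤ c + t.length * c := add_le_add hx ha
        _ = (x :: t).length * c := by push_cast [List.length_cons]; ring
    · refine ⟨a, x + b, by simp [hab]; ring, ha.trans ?_, dvd_add hx hb⟩
      gcongr
      simp

theorem exists_sum_eq_add_of_mem_Sg {g : ℤ} (hg : 1 < g) {l : List ℤ} (hl : ∀ x ∈ l, x ∈ Sg g)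
    (B : ℕ) :
    ∃ T, T + B ≤ (l.length + 1) * B ∧
      ∃ a b, l.sum = a + b ∧ |a| ≤ l.length * g ^ T ∧ g ^ (T + B) ∣ b := by
  obtain ⟨j, hj, hgap⟩ :=
    (l.map (Nat.log g.natAbs ·.natAbs)).exists_le_length_forall_lt_or_le B
  rw [List.length_map] at hj
  refine ⟨j * B, by nlinarith,
    l.exists_sum_eq_add_of_forall_abs_le_or_dvd (by positivity) _ fun x hx => ?_⟩
  rw [abs_eq_pow_log_of_mem_Sg hg (hl x hx)]
  rcases hgap _ (List.mem_map_of_mem hx) with h | h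
  · exact .inl (pow_le_pow_right₀ hg.le h.le)
  · refine .inr ((pow_dvd_pow g (by linarith)).trans ?_)
    rw [← abs_eq_pow_log_of_mem_Sg hg (hl x hx)]
    exact abs_dvd_self x

theorem not_pow_add_dvd_mul_add_one {g p a C : ℤ} {T B : ℕ} (hg : 0 < g) (hp : 1 < p)
    (ha : |a| ≤ C * g ^ T) (hB : p * C + 1 < g ^ B) : ¬ g ^ (T + B) ∣ p * a + 1 := by
  intro hdvd
  have hne : p * a + 1 ≠ 0 := by
    intro h
    have := Int.le_of_dvd one_pos (⟨-a, by linear_combination h⟩ : p ∣ 1)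
    omega
  have hgT : 0 < g ^ T := pow_pos hg T
  have hpa : p * |a| ≤ p * (C * g ^ T) := mul_le_mul_of_nonneg_left ha (by omega)
  have := calc g ^ T * g ^ B = g ^ (T + B) := (pow_add g T B).symm
    _ ≤ |p * a + 1| := Int.le_of_dvd (abs_pos.mpr hne) ((dvd_abs _ _).mpr hdvd)
    _ ≤ p * |a| + 1 := by simpa [abs_mul, abs_of_pos (by omega : 0 < p)] using abs_add_le (p * a) 1
  nlinarith

theorem stmt_6 (g : ℤ) (hg : 2 ≤ g) (p : ℕ) (hp : p.Prime)
    (hcop : IsCoprime (p : ℤ) g) :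
    ¬ ∃ C : ℕ, ∀ i : ℕ, wlen g ((g ^ ((p - 1) * i) - 1) / (p : ℤ)) ≤ C := by
  rintro ⟨C, hC⟩
  set B := p * C + 1
  set N := (p - 1) * ((C + 1) * B)
  have hB : (p : ℤ) * C + 1 < g ^ B := by
    calc ((B : ℕ) : ℤ) < 2 ^ B := by exact_mod_cast B.lt_two_pow_self
      _ ≤ g ^ B := pow_le_pow_left₀ (by norm_num) hg B
  have hfermat : (p : ℤ) ∣ g ^ N - 1 := by
    rw [pow_mul]
    simpa using ((Int.ModEq.pow_card_sub_one_eq_one hp hcop.symm).pow _).symm.dvd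
  obtain ⟨l, hl, hlen, hsum⟩ := exists_list_wlen g ((g ^ N - 1) / p)
  obtain ⟨T, hTB, a, b, hab, ha, hb⟩ := exists_sum_eq_add_of_mem_Sg (by omega) hl B
  have hlC : (l.length : ℤ) ≤ C := by exact_mod_cast hlen ▸ hC _
  have hTN : T + B ≤ N := hTB.trans ((Nat.mul_le_mul_right B (by omega)).trans
    (Nat.le_mul_of_pos_left _ (by have := hp.two_le; omega)))
  refine not_pow_add_dvd_mul_add_one (by omega) (by exact_mod_cast hp.one_lt)
    (ha.trans (mul_le_mul_of_nonneg_right hlC (by positivity))) hB ?_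
  have hpk : (p : ℤ) * (a + b) = g ^ N - 1 := by rw [← hab, hsum, Int.mul_ediv_cancel' hfermat]
  rw [show (p : ℤ) * a + 1 = g ^ N - p * b by linear_combination hpk]
  exact dvd_sub (pow_dvd_pow g hTN) (hb.mul_left _)
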